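/- arXiv:1611.08175 — 2 statements merged into one kernel-verified Lean document; each statement's English description precedes it below -/
import Mathlib

section
/- Let P and Q be positive joint distributions on 𝒳 × 𝒴 and let 0 < r < E(Q‖P). Then the minimizer Q* of min{ D(Q̄‖Q) : Q̄ a joint distribution with E(Q̄‖P) ≤ r } is unique, and the minimizer P* of min{ E(P̄‖Q) : P̄ a joint distribution with D(P̄‖P) ≤ r } is unique; moreover Q* and P* are positive, Q* ∈ ℰ^{xy}(Q), P* ∈ ℰ^{xy}(P), and they have the same marginals: Q*_X = P*_X and Q*_Y = P*_Y. -/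
open scoped Classical BigOperators

noncomputable section

variable {X Y : Type*} [Fintype X] [Fintype Y]

/-- `P` is a joint distribution on `X × Y`. -/
def IsDist (P : X × Y → ℝ) : Prop :=
  (∀ z, 0 ≤ P z) ∧ ∑ z : X × Y, P z = 1

/-- `P` is a positive joint distribution on `X × Y`. -/
def IsPos (P : X × Y → ℝ) : Prop :=
  (∀ z, 0 < P z) ∧ ∑ z : X × Y, P z = 1

/-- The first marginal of a joint distribution. -/
def margX (P : X × Y → ℝ) (x : X) : ℝ := ∑ y : Y, P (x, y)

/-- The second marginal of a joint distribution. -/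
def margY (P : X × Y → ℝ) (y : Y) : ℝ := ∑ x : X, P (x, y)

/-- Relative entropy `D(P‖Q)` (natural log; `Real.log 0 = 0` realizes `0·log 0 = 0`). -/
def relEnt (P Q : X × Y → ℝ) : ℝ := ∑ z : X × Y, P z * Real.log (P z / Q z)

/-- Projected relative entropy `E(P‖Q)`. -/
def projE (P Q : X × Y → ℝ) : ℝ :=
  sInf { d : ℝ | ∃ P' : X × Y → ℝ,
    IsDist P' ∧ margX P' = margX P ∧ margY P' = margY P ∧ d = relEnt P' Q }

/-- `R ∈ ℰ^{xy}(S)` : `R` has the same correlation coordinates as `S`. -/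
def SameCorr (R S : X × Y → ℝ) : Prop :=
  ∃ a1 : X → ℝ, ∃ a2 : Y → ℝ,
    ∀ x : X, ∀ y : Y, Real.log (R (x, y) / S (x, y)) = a1 x + a2 y

/-- The type (empirical distribution) of a sequence. -/
def empDist {n : ℕ} (x : Fin n → X) (a : X) : ℝ :=
  ((Finset.univ.filter fun i => x i = a).card : ℝ) / n

/-- The joint type of a pair of sequences. -/
def empJoint {n : ℕ} (x : Fin n → X) (y : Fin n → Y) (z : X × Y) : ℝ :=
  ((Finset.univ.filter fun i => x i = z.1 ∧ y i = z.2).card : ℝ) / n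

/-- Probability of a set under the `n`-fold i.i.d. product of `P`. -/
def prodProb (P : X × Y → ℝ) (n : ℕ) (A : Set ((Fin n → X) × (Fin n → Y))) : ℝ :=
  ∑ z : (Fin n → X) × (Fin n → Y),
    if z ∈ A then ∏ i : Fin n, P (z.1 i, z.2 i) else 0

/-- `P` is a joint type with denominator `n` (an element of `𝒫ₙ(𝒳 × 𝒴)`). -/
def IsTypeN (n : ℕ) (P : X × Y → ℝ) : Prop :=
  IsDist P ∧ ∀ z : X × Y, ∃ k : ℕ, P z = (k : ℝ) / n

/-- `Eₙ(P̄‖Q)` : projected relative entropy restricted to joint types. -/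
def En (n : ℕ) (Pbar Q : X × Y → ℝ) : ℝ :=
  sInf { d : ℝ | ∃ Pt : X × Y → ℝ,
    IsTypeN n Pt ∧ margX Pt = margX Pbar ∧ margY Pt = margY Pbar ∧ d = relEnt Pt Q }

/-- Standard normal cumulative distribution function `Φ`. -/
def stdNormalCDF (t : ℝ) : ℝ :=
  ∫ u in Set.Iic t, (Real.sqrt (2 * Real.pi))⁻¹ * Real.exp (-(u ^ 2) / 2)

/-- Inverse of the standard normal CDF, `Φ⁻¹`. -/
def stdNormalCDFInv (e : ℝ) : ℝ := Function.invFun stdNormalCDF e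

/-!
Both optimal values equal the minimum of `D(A‖Q)` over pairs `(A, B)` with equal marginals and
`D(B‖P) ≤ r`, so compactness yields optimizers of both problems at once, and the `I`-projection
of `Q` onto the marginal class of any `P*` is a `Q*`. Strict convexity of `D(·‖Q)` and convexity of
`E(·‖P)` make `Q*` unique; hence every `P*` has the marginals of `Q*`. Because `E(P*‖Q) > 0` when
`r < E(Q‖P)`, moving `P*` towards `Q` must leave the constraint set, so `D(P*‖P) = r`, and strict
convexity of `D(·‖P)` on a marginal class then makes `P*` unique. An optimizer vanishing somewhere
could be improved by mixing in a little of `P` (resp. `Q`), as `t log t` has slope `-∞` at `0`.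
Finally each optimizer minimises relative entropy on its marginal class, and the first-order
condition along `δ_{xy} - δ_{xy'} - δ_{x'y} + δ_{x'y'}` says that `log (Q*/Q)` (resp.
`log (P*/P)`) is a sum `a₁ x + a₂ y`.
-/

open Real Set Filter Topology InformationTheory

variable {P Q A B R Qs Ps : X × Y → ℝ} {r s : ℝ}

lemma IsPos.isDist (h : IsPos P) : IsDist P := ⟨fun z => (h.1 z).le, h.2⟩

lemma IsDist.mix (hA : IsDist A) (hB : IsDist B) (hs0 : 0 ≤ s) (hs1 : s ≤ 1) :
    IsDist ((1 - s) • A + s • B) :=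
  convex_stdSimplex ℝ (X × Y) hA hB (sub_nonneg.2 hs1) hs0 (sub_add_cancel 1 s)

omit [Fintype X] in
@[simp] lemma margX_add (A B : X × Y → ℝ) : margX (A + B) = margX A + margX B := by
  ext x; simp [margX, Finset.sum_add_distrib]

omit [Fintype X] in
@[simp] lemma margX_smul (c : ℝ) (A : X × Y → ℝ) : margX (c • A) = c • margX A := by
  ext x; simp [margX, Finset.mul_sum]

omit [Fintype Y] in
@[simp] lemma margY_add (A B : X × Y → ℝ) : margY (A + B) = margY A + margY B := by
  ext y; simp [margY, Finset.sum_add_distrib]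

omit [Fintype Y] in
@[simp] lemma margY_smul (c : ℝ) (A : X × Y → ℝ) : margY (c • A) = c • margY A := by
  ext y; simp [margY, Finset.mul_sum]

omit [Fintype X] in
lemma continuous_margX : Continuous (margX : (X × Y → ℝ) → X → ℝ) :=
  continuous_pi fun _ => continuous_finsetSum _ fun _ _ => continuous_apply _

omit [Fintype Y] in
lemma continuous_margY : Continuous (margY : (X × Y → ℝ) → Y → ℝ) :=
  continuous_pi fun _ => continuous_finsetSum _ fun _ _ => continuous_apply _

lemma mul_log_div_eq_mul_log_sub {q : ℝ} (hq : 0 < q) (p : ℝ) :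
    p * log (p / q) = p * log p - p * log q := by
  rcases eq_or_ne p 0 with rfl | hp
  · simp
  · rw [log_div hp hq.ne', mul_sub]

lemma mul_log_div_eq_klFun {q : ℝ} (hq : 0 < q) (p : ℝ) :
    p * log (p / q) = q * klFun (p / q) + p - q := by
  rw [klFun_apply]
  field_simp
  ring

lemma strictConvexOn_mul_log_div {q : ℝ} (hq : 0 < q) :
    StrictConvexOn ℝ (Ici 0) fun p => p * log (p / q) := by
  simp_rw [mul_log_div_eq_mul_log_sub hq]
  exact strictConvexOn_mul_log.sub_concaveOn
    ((LinearMap.id.smulRight (log q)).concaveOn (convex_Ici 0))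

lemma mul_log_mul_div_eq {q b s : ℝ} (hq : q ≠ 0) (hs : 0 < s) :
    (s * b) * log (s * b / q) = s * (b * log (b / q)) + s * b * log s := by
  rcases eq_or_ne b 0 with rfl | hb
  · simp
  rw [mul_div_assoc, log_mul hs.ne' (div_ne_zero hb hq)]
  ring

lemma continuous_relEnt (hQ : ∀ z, 0 < Q z) : Continuous fun A : X × Y → ℝ => relEnt A Q := by
  simp_rw [relEnt, mul_log_div_eq_mul_log_sub (hQ _)]
  fun_prop

lemma relEnt_eq_sum_klFun (hA : IsDist A) (hQ : IsPos Q) :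
    relEnt A Q = ∑ z, Q z * klFun (A z / Q z) := by
  simp_rw [relEnt, mul_log_div_eq_klFun (hQ.1 _), Finset.sum_sub_distrib, Finset.sum_add_distrib,
    hA.2, hQ.2, add_sub_cancel_right]

lemma relEnt_nonneg (hA : IsDist A) (hQ : IsPos Q) : 0 ≤ relEnt A Q := by
  rw [relEnt_eq_sum_klFun hA hQ]
  exact Finset.sum_nonneg fun z _ =>
    mul_nonneg (hQ.1 z).le (klFun_nonneg (div_nonneg (hA.1 z) (hQ.1 z).le))

lemma eq_of_relEnt_eq_zero (hA : IsDist A) (hQ : IsPos Q) (h : relEnt A Q = 0) : A = Q := by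
  rw [relEnt_eq_sum_klFun hA hQ] at h
  have hkl_nonneg : ∀ z ∈ Finset.univ, 0 ≤ Q z * klFun (A z / Q z) :=
    fun z _ => mul_nonneg (hQ.1 z).le
      (klFun_nonneg (div_nonneg (hA.1 z) (hQ.1 z).le))
  funext z
  have hz := (Finset.sum_eq_zero_iff_of_nonneg hkl_nonneg).1 h z (Finset.mem_univ z)
  rw [mul_eq_zero, or_iff_right (hQ.1 z).ne',
    klFun_eq_zero_iff (div_nonneg (hA.1 z) (hQ.1 z).le),
    div_eq_one_iff_eq (hQ.1 z).ne'] at hz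
  exact hz

lemma relEnt_self (hQ : ∀ z, 0 < Q z) : relEnt Q Q = 0 :=
  Finset.sum_eq_zero fun z _ => by rw [div_self (hQ z).ne', log_one, mul_zero]

lemma relEnt_mix_le (hA : ∀ z, 0 ≤ A z) (hB : ∀ z, 0 ≤ B z) (hQ : ∀ z, 0 < Q z)
    (hs0 : 0 ≤ s) (hs1 : s ≤ 1) :
    relEnt ((1 - s) • A + s • B) Q ≤ (1 - s) * relEnt A Q + s * relEnt B Q := by
  simp only [relEnt, Finset.mul_sum, ← Finset.sum_add_distrib]
  exact Finset.sum_le_sum fun z _ =>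
    (strictConvexOn_mul_log_div (hQ z)).convexOn.2 (hA z) (hB z) (sub_nonneg.2 hs1) hs0
      (sub_add_cancel 1 s)

lemma relEnt_mix_lt (hA : ∀ z, 0 ≤ A z) (hB : ∀ z, 0 ≤ B z) (hQ : ∀ z, 0 < Q z)
    (hAB : A ≠ B) (hs0 : 0 < s) (hs1 : s < 1) :
    relEnt ((1 - s) • A + s • B) Q < (1 - s) * relEnt A Q + s * relEnt B Q := by
  obtain ⟨z₀, hz₀⟩ := Function.ne_iff.1 hAB
  simp only [relEnt, Finset.mul_sum, ← Finset.sum_add_distrib]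
  refine Finset.sum_lt_sum (fun z _ => ?_) ⟨z₀, Finset.mem_univ _, ?_⟩
  · exact (strictConvexOn_mul_log_div (hQ z)).convexOn.2 (hA z) (hB z) (sub_nonneg.2 hs1.le)
      hs0.le (sub_add_cancel 1 s)
  · exact (strictConvexOn_mul_log_div (hQ z₀)).2 (hA z₀) (hB z₀) hz₀ (sub_pos.2 hs1) hs0
      (sub_add_cancel 1 s)

lemma eq_sInf_image_iff_isMinOn {α : Type*} {f : α → ℝ} {S : Set α} {a : α} (ha : a ∈ S)
    (hf : BddBelow (f '' S)) : f a = sInf (f '' S) ↔ IsMinOn f S a :=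
  ⟨fun h => isMinOn_iff.2 fun _ hx => h ▸ csInf_le hf (mem_image_of_mem f hx),
    fun h => ((h.isGLB ha).csInf_eq ⟨f a, a, ha, rfl⟩).symm⟩

lemma bddBelow_relEnt_image (hQ : IsPos Q) {S : Set (X × Y → ℝ)} (hS : ∀ A ∈ S, IsDist A) :
    BddBelow ((relEnt · Q) '' S) :=
  ⟨0, forall_mem_image.2 fun A hA => relEnt_nonneg (hS A hA) hQ⟩

def sameMarginals (A : X × Y → ℝ) : Set (X × Y → ℝ) :=
  {R | IsDist R ∧ margX R = margX A ∧ margY R = margY A}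

lemma mem_sameMarginals_self (hA : IsDist A) : A ∈ sameMarginals A := ⟨hA, rfl, rfl⟩

lemma isCompact_sameMarginals (A : X × Y → ℝ) : IsCompact (sameMarginals A) :=
  (isCompact_stdSimplex ℝ _).inter_right
    ((isClosed_eq continuous_margX continuous_const).inter
      (isClosed_eq continuous_margY continuous_const))

lemma projE_eq_sInf_image (A Q : X × Y → ℝ) :
    projE A Q = sInf ((relEnt · Q) '' sameMarginals A) := by
  simp only [projE, sameMarginals, image, mem_ofPred_eq, eq_comm, and_assoc]

lemma projE_congr (hX : margX A = margX B) (hY : margY A = margY B) : projE A Q = projE B Q := by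
  rw [projE, projE, hX, hY]

lemma projE_le_relEnt (hQ : IsPos Q) (hR : R ∈ sameMarginals A) : projE A Q ≤ relEnt R Q :=
  (projE_eq_sInf_image A Q).symm ▸
    csInf_le (bddBelow_relEnt_image hQ fun _ h => h.1) (mem_image_of_mem _ hR)

lemma exists_relEnt_eq_projE (hA : IsDist A) (hQ : IsPos Q) :
    ∃ R ∈ sameMarginals A, relEnt R Q = projE A Q := by
  obtain ⟨R, hR, hmin⟩ := (isCompact_sameMarginals A).exists_isMinOn
    ⟨A, mem_sameMarginals_self hA⟩ (continuous_relEnt hQ.1).continuousOn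
  refine ⟨R, hR, ?_⟩
  rw [projE_eq_sInf_image,
    eq_sInf_image_iff_isMinOn hR (bddBelow_relEnt_image hQ fun _ h => h.1)]
  exact hmin

lemma projE_nonneg (hA : IsDist A) (hQ : IsPos Q) : 0 ≤ projE A Q := by
  obtain ⟨R, hR, hRA⟩ := exists_relEnt_eq_projE hA hQ
  exact hRA ▸ relEnt_nonneg hR.1 hQ

lemma projE_self (hQ : IsPos Q) : projE Q Q = 0 :=
  le_antisymm (relEnt_self hQ.1 ▸ projE_le_relEnt hQ (mem_sameMarginals_self hQ.isDist))
    (projE_nonneg hQ.isDist hQ)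

lemma projE_mix_le (hA : IsDist A) (hB : IsDist B) (hQ : IsPos Q) (hs0 : 0 ≤ s) (hs1 : s ≤ 1) :
    projE ((1 - s) • A + s • B) Q ≤ (1 - s) * projE A Q + s * projE B Q := by
  obtain ⟨RA, hRA, hRAA⟩ := exists_relEnt_eq_projE hA hQ
  obtain ⟨RB, hRB, hRBB⟩ := exists_relEnt_eq_projE hB hQ
  have hmix : (1 - s) • RA + s • RB ∈ sameMarginals ((1 - s) • A + s • B) :=
    ⟨hRA.1.mix hRB.1 hs0 hs1, by simp [hRA.2.1, hRB.2.1], by simp [hRA.2.2, hRB.2.2]⟩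
  calc projE ((1 - s) • A + s • B) Q ≤ relEnt ((1 - s) • RA + s • RB) Q :=
        projE_le_relEnt hQ hmix
    _ ≤ (1 - s) * relEnt RA Q + s * relEnt RB Q :=
        relEnt_mix_le hRA.1.1 hRB.1.1 hQ.1 hs0 hs1
    _ = (1 - s) * projE A Q + s * projE B Q := by rw [hRAA, hRBB]

lemma hasDerivAt_relEnt_add_smul {u q : X × Y → ℝ} (hq : ∀ z, 0 < q z) (hu : ∀ z, 0 < u z)
    (h : X × Y → ℝ) :
    HasDerivAt (fun t : ℝ => relEnt (u + t • h) q) (∑ z, h z * (log (u z / q z) + 1)) 0 := by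
  simp_rw [relEnt, mul_log_div_eq_mul_log_sub (hq _)]
  refine HasDerivAt.fun_sum fun z _ => ?_
  have hline : HasDerivAt (fun t : ℝ => (u + t • h) z) (h z) 0 := by
    simpa using ((hasDerivAt_id (0 : ℝ)).mul_const (h z)).const_add (u z)
  have hmul_log := (hasDerivAt_mul_log (hu z).ne').comp_of_eq 0 hline (by simp)
  refine (hmul_log.sub (hline.mul_const (log (q z)))).congr_deriv ?_
  rw [log_div (hu z).ne' (hq z).ne']
  ring

lemma eventually_add_smul_mem_sameMarginals {u h : X × Y → ℝ} (hu : IsPos u)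
    (hX : margX h = 0) (hY : margY h = 0) :
    ∀ᶠ t in 𝓝 (0 : ℝ), u + t • h ∈ sameMarginals u := by
  have hsum : ∑ z, h z = 0 := by
    rw [Fintype.sum_prod_type]
    exact Finset.sum_eq_zero fun x _ => congr_fun hX x
  have hnonneg : ∀ᶠ t in 𝓝 (0 : ℝ), ∀ z, 0 < u z + t * h z :=
    eventually_all.2 fun z => Tendsto.eventually_const_lt (by simpa using hu.1 z)
      (Continuous.tendsto (by fun_prop) 0)
  filter_upwards [hnonneg] with t ht
  refine ⟨⟨fun z => (ht z).le, ?_⟩, by simp [hX], by simp [hY]⟩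
  simp [Finset.sum_add_distrib, ← Finset.mul_sum, hsum, hu.2]

def rectangle (x x' : X) (y y' : Y) : X × Y → ℝ := fun z =>
  (Pi.single x 1 - Pi.single x' 1 : X → ℝ) z.1 * (Pi.single y 1 - Pi.single y' 1 : Y → ℝ) z.2

omit [Fintype X] in
lemma margX_rectangle (x x' : X) (y y' : Y) : margX (rectangle x x' y y') = 0 := by
  ext a; simp [margX, rectangle, ← Finset.mul_sum, Finset.sum_sub_distrib]

omit [Fintype Y] in
lemma margY_rectangle (x x' : X) (y y' : Y) : margY (rectangle x x' y y') = 0 := by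
  ext b; simp [margY, rectangle, ← Finset.sum_mul, Finset.sum_sub_distrib]

lemma sum_rectangle_mul (x x' : X) (y y' : Y) (G : X × Y → ℝ) :
    ∑ z, rectangle x x' y y' z * G z = G (x, y) - G (x, y') - G (x', y) + G (x', y') := by
  simp only [rectangle, Pi.sub_apply, Pi.single_apply, mul_sub, mul_ite, mul_one, mul_zero,
    sub_mul, ite_mul, one_mul, zero_mul, Finset.sum_sub_distrib, Fintype.sum_prod_type,
    Finset.sum_ite_eq', Finset.mem_univ, ↓reduceIte]
  ring

omit [Fintype X] [Fintype Y] in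
lemma exists_eq_add_of_forall_rectangle {L : X × Y → ℝ} (x₀ : X) (y₀ : Y)
    (hL : ∀ x x' y y', L (x, y) - L (x, y') - L (x', y) + L (x', y') = 0) :
    ∃ a₁ : X → ℝ, ∃ a₂ : Y → ℝ, ∀ x y, L (x, y) = a₁ x + a₂ y :=
  ⟨fun x => L (x, y₀), fun y => L (x₀, y) - L (x₀, y₀), fun x y => by
    linarith [hL x x₀ y y₀]⟩

lemma sameCorr_of_isMinOn {u q : X × Y → ℝ} (hq : ∀ z, 0 < q z) (hu : IsPos u)
    (hmin : IsMinOn (relEnt · q) (sameMarginals u) u) : SameCorr u q := by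
  obtain ⟨⟨x₀, y₀⟩, -⟩ := Finset.nonempty_of_sum_ne_zero (hu.2 ▸ one_ne_zero)
  refine exists_eq_add_of_forall_rectangle (L := fun z => log (u z / q z)) x₀ y₀ fun x x' y y' => ?_
  have hloc : IsLocalMin (fun t : ℝ => relEnt (u + t • rectangle x x' y y') q) 0 :=
    (eventually_add_smul_mem_sameMarginals hu (margX_rectangle ..) (margY_rectangle ..)).mono
      fun t ht => by simpa using hmin ht
  have hderiv := hloc.hasDerivAt_eq_zero (hasDerivAt_relEnt_add_smul hq hu.1 _)
  rw [sum_rectangle_mul] at hderiv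
  linarith

-- Mixing in a little of `B` fills the zero of `A` at `z₀`; there `t ↦ t log t` has slope `-∞`.
lemma eventually_relEnt_mix_lt (hQ : ∀ z, 0 < Q z) (hA : ∀ z, 0 ≤ A z) (hB : ∀ z, 0 ≤ B z)
    {z₀ : X × Y} (hAz : A z₀ = 0) (hBz : 0 < B z₀) :
    ∀ᶠ s : ℝ in 𝓝[>] 0, relEnt ((1 - s) • A + s • B) Q < relEnt A Q := by
  have hbound : ∀ s ∈ Ioo (0 : ℝ) 1, relEnt ((1 - s) • A + s • B) Q
      ≤ (1 - s) * relEnt A Q + s * relEnt B Q + s * B z₀ * log s := by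
    rintro s ⟨hs0, hs1⟩
    have hterm : ∀ z, ((1 - s) • A + s • B) z * log (((1 - s) • A + s • B) z / Q z)
        ≤ (1 - s) * (A z * log (A z / Q z)) + s * (B z * log (B z / Q z))
          + if z = z₀ then s * B z₀ * log s else 0 := by
      intro z
      split_ifs with hz
      · subst hz
        simp [hAz, mul_log_mul_div_eq (hQ _).ne' hs0]
      · simpa using (strictConvexOn_mul_log_div (hQ z)).convexOn.2 (hA z) (hB z)
          (sub_nonneg.2 hs1.le) hs0.le (sub_add_cancel 1 s)
    calc relEnt ((1 - s) • A + s • B) Q ≤ _ := Finset.sum_le_sum fun z _ => hterm z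
      _ = _ := by simp [relEnt, Finset.sum_add_distrib, Finset.mul_sum]
  have hlog : ∀ᶠ s in 𝓝[>] 0, B z₀ * log s < relEnt A Q - relEnt B Q :=
    (tendsto_log_nhdsGT_zero.const_mul_atBot hBz).eventually (eventually_lt_atBot _)
  filter_upwards [hlog, Ioo_mem_nhdsGT one_pos] with s hlogs hs
  nlinarith [hbound s hs, hs.1]

def projEBall (P : X × Y → ℝ) (r : ℝ) : Set (X × Y → ℝ) := {A | IsDist A ∧ projE A P ≤ r}

def relEntBall (P : X × Y → ℝ) (r : ℝ) : Set (X × Y → ℝ) := {A | IsDist A ∧ relEnt A P ≤ r}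

-- The paper's `Q*` and `P*`.
def IsOptimalQ (P Q : X × Y → ℝ) (r : ℝ) (Qs : X × Y → ℝ) : Prop :=
  Qs ∈ projEBall P r ∧ IsMinOn (relEnt · Q) (projEBall P r) Qs

def IsOptimalP (P Q : X × Y → ℝ) (r : ℝ) (Ps : X × Y → ℝ) : Prop :=
  Ps ∈ relEntBall P r ∧ IsMinOn (projE · Q) (relEntBall P r) Ps

lemma isOptimalQ_iff (hQ : IsPos Q) :
    (IsDist Qs ∧ projE Qs P ≤ r ∧ relEnt Qs Q = sInf {d : ℝ | ∃ Qbar : X × Y → ℝ,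
      IsDist Qbar ∧ projE Qbar P ≤ r ∧ d = relEnt Qbar Q}) ↔ IsOptimalQ P Q r Qs := by
  have himage : {d : ℝ | ∃ Qbar : X × Y → ℝ, IsDist Qbar ∧ projE Qbar P ≤ r ∧ d = relEnt Qbar Q}
      = (relEnt · Q) '' projEBall P r := by
    simp only [projEBall, image, mem_ofPred_eq, eq_comm, and_assoc]
  rw [himage, ← and_assoc]
  change Qs ∈ projEBall P r ∧ _ ↔ _
  exact and_congr_right fun h =>
    eq_sInf_image_iff_isMinOn h (bddBelow_relEnt_image hQ fun _ h => h.1)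

lemma isOptimalP_iff (hQ : IsPos Q) :
    (IsDist Ps ∧ relEnt Ps P ≤ r ∧ projE Ps Q = sInf {d : ℝ | ∃ Pbar : X × Y → ℝ,
      IsDist Pbar ∧ relEnt Pbar P ≤ r ∧ d = projE Pbar Q}) ↔ IsOptimalP P Q r Ps := by
  have himage : {d : ℝ | ∃ Pbar : X × Y → ℝ, IsDist Pbar ∧ relEnt Pbar P ≤ r ∧ d = projE Pbar Q}
      = (projE · Q) '' relEntBall P r := by
    simp only [relEntBall, image, mem_ofPred_eq, eq_comm, and_assoc]
  rw [himage, ← and_assoc]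
  change Ps ∈ relEntBall P r ∧ _ ↔ _
  exact and_congr_right fun h => eq_sInf_image_iff_isMinOn h
    ⟨0, forall_mem_image.2 fun _ hA => projE_nonneg hA.1 hQ⟩

def coupledPairs (P : X × Y → ℝ) (r : ℝ) : Set ((X × Y → ℝ) × (X × Y → ℝ)) :=
  {p | p.1 ∈ sameMarginals p.2 ∧ p.2 ∈ relEntBall P r}

lemma isCompact_coupledPairs (hP : ∀ z, 0 < P z) (r : ℝ) : IsCompact (coupledPairs P r) := by
  refine ((isCompact_stdSimplex ℝ _).prod (isCompact_stdSimplex ℝ _)).of_isClosed_subset ?_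
    fun p hp => ⟨hp.1.1, hp.2.1⟩
  have hsimplex := (isCompact_stdSimplex ℝ (X × Y)).isClosed
  have hmargX : IsClosed {p : (X × Y → ℝ) × (X × Y → ℝ) | margX p.1 = margX p.2} :=
    isClosed_eq (continuous_margX.comp continuous_fst) (continuous_margX.comp continuous_snd)
  have hmargY : IsClosed {p : (X × Y → ℝ) × (X × Y → ℝ) | margY p.1 = margY p.2} :=
    isClosed_eq (continuous_margY.comp continuous_fst) (continuous_margY.comp continuous_snd)
  exact ((hsimplex.preimage continuous_fst).inter (hmargX.inter hmargY)).inter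
    ((hsimplex.preimage continuous_snd).inter
      (isClosed_le ((continuous_relEnt hP).comp continuous_snd) continuous_const))

-- Both problems are the minimisation of `relEnt p.1 Q` over `coupledPairs P r`.
lemma exists_isOptimalQ_isOptimalP (hP : IsPos P) (hQ : IsPos Q) (hr : 0 ≤ r) :
    ∃ Qs Ps, IsOptimalQ P Q r Qs ∧ IsOptimalP P Q r Ps := by
  have hPP : (P, P) ∈ coupledPairs P r :=
    ⟨mem_sameMarginals_self hP.isDist, hP.isDist, (relEnt_self hP.1).trans_le hr⟩
  obtain ⟨⟨A, B⟩, ⟨hAB, hB⟩, hmin⟩ := (isCompact_coupledPairs hP.1 r).exists_isMinOn ⟨_, hPP⟩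
    ((continuous_relEnt hQ.1).comp continuous_fst).continuousOn
  refine ⟨A, B, ⟨⟨hAB.1, ?_⟩, isMinOn_iff.2 fun A' hA' => ?_⟩, ⟨hB, isMinOn_iff.2 fun B' hB' => ?_⟩⟩
  · rw [projE_congr hAB.2.1 hAB.2.2]
    exact (projE_le_relEnt hP (mem_sameMarginals_self hB.1)).trans hB.2
  · obtain ⟨R, hR, hRA'⟩ := exists_relEnt_eq_projE hA'.1 hP
    exact isMinOn_iff.1 hmin (A', R) ⟨⟨hA'.1, hR.2.1.symm, hR.2.2.symm⟩, hR.1, hRA' ▸ hA'.2⟩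
  · obtain ⟨R, hR, hRB'⟩ := exists_relEnt_eq_projE hB'.1 hQ
    calc projE B Q ≤ relEnt A Q := projE_le_relEnt hQ hAB
      _ ≤ relEnt R Q := isMinOn_iff.1 hmin (R, B') ⟨hR, hB'⟩
      _ = projE B' Q := hRB'

lemma IsOptimalQ.le (h : IsOptimalQ P Q r Qs) (hA : A ∈ projEBall P r) :
    relEnt Qs Q ≤ relEnt A Q :=
  h.2 hA

lemma IsOptimalQ.unique (hP : IsPos P) (hQ : IsPos Q) (hA : IsOptimalQ P Q r A)
    (hB : IsOptimalQ P Q r B) : A = B := by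
  by_contra hAB
  have hmid : (1 - 1 / 2 : ℝ) • A + (1 / 2 : ℝ) • B ∈ projEBall P r := by
    refine ⟨hA.1.1.mix hB.1.1 (by norm_num) (by norm_num), ?_⟩
    linarith [projE_mix_le hA.1.1 hB.1.1 hP (s := 1 / 2) (by norm_num) (by norm_num), hA.1.2,
      hB.1.2]
  linarith [relEnt_mix_lt hA.1.1.1 hB.1.1.1 hQ.1 hAB (s := 1 / 2) (by norm_num) (by norm_num),
    hA.le hmid, hA.le hB.1, hB.le hA.1]

lemma IsOptimalQ.isPos (hP : IsPos P) (hQ : IsPos Q) (h : IsOptimalQ P Q r Qs) : IsPos Qs := by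
  refine ⟨fun z => (h.1.1.1 z).lt_of_ne' fun hz => ?_, h.1.1.2⟩
  obtain ⟨s, hlt, hs⟩ := ((eventually_relEnt_mix_lt hQ.1 h.1.1.1 (hP.1 · |>.le) hz (hP.1 z)).and
    (Ioo_mem_nhdsGT one_pos)).exists
  have hmix := projE_mix_le h.1.1 hP.isDist hP hs.1.le hs.2.le
  rw [projE_self hP] at hmix
  have hmem : (1 - s) • Qs + s • P ∈ projEBall P r :=
    ⟨h.1.1.mix hP.isDist hs.1.le hs.2.le, by nlinarith [h.1.2, projE_nonneg h.1.1 hP, hs.1]⟩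
  exact (h.le hmem).not_gt hlt

lemma IsOptimalQ.sameCorr (hP : IsPos P) (hQ : IsPos Q) (h : IsOptimalQ P Q r Qs) :
    SameCorr Qs Q :=
  sameCorr_of_isMinOn hQ.1 (h.isPos hP hQ) <| isMinOn_iff.2 fun _ hA =>
    h.le ⟨hA.1, (projE_congr hA.2.1 hA.2.2).trans_le h.1.2⟩

lemma IsOptimalP.le (h : IsOptimalP P Q r Ps) (hA : A ∈ relEntBall P r) :
    projE Ps Q ≤ projE A Q :=
  h.2 hA

lemma projE_pos_of_mem_relEntBall (hP : IsPos P) (hQ : IsPos Q) (hr : r < projE Q P)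
    (hA : A ∈ relEntBall P r) : 0 < projE A Q := by
  refine (projE_nonneg hA.1 hQ).lt_of_ne fun h0 => hr.not_ge ?_
  obtain ⟨R, hR, hRA⟩ := exists_relEnt_eq_projE hA.1 hQ
  obtain rfl : R = Q := eq_of_relEnt_eq_zero hR.1 hQ (hRA.trans h0.symm)
  calc projE R P = projE A P := projE_congr hR.2.1 hR.2.2
    _ ≤ relEnt A P := projE_le_relEnt hP (mem_sameMarginals_self hA.1)
    _ ≤ r := hA.2

-- Moving from `P*` towards `Q` lowers `projE · Q`, since `projE Q Q = 0`.
lemma IsOptimalP.lt_relEnt_mix (hP : IsPos P) (hQ : IsPos Q) (hr : r < projE Q P)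
    (h : IsOptimalP P Q r Ps) (hs0 : 0 < s) (hs1 : s ≤ 1) :
    r < relEnt ((1 - s) • Ps + s • Q) P := by
  by_contra! hle
  have hmix := projE_mix_le h.1.1 hQ.isDist hQ hs0.le hs1
  rw [projE_self hQ] at hmix
  nlinarith [h.le ⟨h.1.1.mix hQ.isDist hs0.le hs1, hle⟩, projE_pos_of_mem_relEntBall hP hQ hr h.1]

lemma IsOptimalP.relEnt_eq (hP : IsPos P) (hQ : IsPos Q) (hr : r < projE Q P)
    (h : IsOptimalP P Q r Ps) : relEnt Ps P = r := by
  refine h.1.2.antisymm (not_lt.1 fun hlt => ?_)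
  have hlim : Tendsto (fun s : ℝ => (1 - s) * relEnt Ps P + s * relEnt Q P) (𝓝[>] 0)
      (𝓝 (relEnt Ps P)) :=
    ((Continuous.tendsto' (by fun_prop) 0 _ (by simp)).mono_left nhdsWithin_le_nhds)
  obtain ⟨s, hs, hs01⟩ := ((hlim.eventually (gt_mem_nhds hlt)).and
    (Ioc_mem_nhdsGT one_pos)).exists
  exact (h.lt_relEnt_mix hP hQ hr hs01.1 hs01.2).not_ge
    ((relEnt_mix_le h.1.1.1 (hQ.1 · |>.le) hP.1 hs01.1.le hs01.2).trans hs.le)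

lemma IsOptimalP.isPos (hP : IsPos P) (hQ : IsPos Q) (hr : r < projE Q P)
    (h : IsOptimalP P Q r Ps) : IsPos Ps := by
  refine ⟨fun z => (h.1.1.1 z).lt_of_ne' fun hz => ?_, h.1.1.2⟩
  obtain ⟨s, hlt, hs⟩ := ((eventually_relEnt_mix_lt hP.1 h.1.1.1 (hQ.1 · |>.le) hz (hQ.1 z)).and
    (Ioc_mem_nhdsGT one_pos)).exists
  exact (h.lt_relEnt_mix hP hQ hr hs.1 hs.2).not_gt (hlt.trans_le h.1.2)

lemma IsOptimalP.isMinOn_relEnt (hP : IsPos P) (hQ : IsPos Q) (hr : r < projE Q P)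
    (h : IsOptimalP P Q r Ps) : IsMinOn (relEnt · P) (sameMarginals Ps) Ps := by
  refine isMinOn_iff.2 fun A hA => not_lt.1 fun hlt => ?_
  have hA_opt : IsOptimalP P Q r A :=
    ⟨⟨hA.1, hlt.le.trans h.1.2⟩,
      isMinOn_iff.2 fun _ hB => (projE_congr hA.2.1 hA.2.2).trans_le (h.le hB)⟩
  exact hlt.ne ((hA_opt.relEnt_eq hP hQ hr).trans (h.relEnt_eq hP hQ hr).symm)

lemma IsOptimalP.sameCorr (hP : IsPos P) (hQ : IsPos Q) (hr : r < projE Q P)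
    (h : IsOptimalP P Q r Ps) : SameCorr Ps P :=
  sameCorr_of_isMinOn hP.1 (h.isPos hP hQ hr) (h.isMinOn_relEnt hP hQ hr)

lemma IsOptimalP.isOptimalQ (hP : IsPos P) (hQ : IsPos Q) (h : IsOptimalP P Q r Ps)
    (hR : R ∈ sameMarginals Ps) (hRPs : relEnt R Q = projE Ps Q) : IsOptimalQ P Q r R := by
  refine ⟨⟨hR.1, ?_⟩, isMinOn_iff.2 fun A hA => ?_⟩
  · rw [projE_congr hR.2.1 hR.2.2]
    exact (projE_le_relEnt hP (mem_sameMarginals_self h.1.1)).trans h.1.2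
  · obtain ⟨T, hT, hTA⟩ := exists_relEnt_eq_projE hA.1 hP
    calc relEnt R Q = projE Ps Q := hRPs
      _ ≤ projE T Q := h.le ⟨hT.1, hTA.trans_le hA.2⟩
      _ = projE A Q := projE_congr hT.2.1 hT.2.2
      _ ≤ relEnt A Q := projE_le_relEnt hQ (mem_sameMarginals_self hA.1)

lemma IsOptimalP.marginals_eq (hP : IsPos P) (hQ : IsPos Q) (hQs : IsOptimalQ P Q r Qs)
    (hPs : IsOptimalP P Q r Ps) : margX Qs = margX Ps ∧ margY Qs = margY Ps := by
  obtain ⟨R, hR, hRPs⟩ := exists_relEnt_eq_projE hPs.1.1 hQ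
  obtain rfl := hQs.unique hP hQ (hPs.isOptimalQ hP hQ hR hRPs)
  exact hR.2

lemma IsOptimalP.unique (hP : IsPos P) (hQ : IsPos Q) (hr : r < projE Q P)
    (hA : IsOptimalP P Q r A) (hB : IsOptimalP P Q r B) : A = B := by
  by_contra hAB
  obtain ⟨R, hR, hRA⟩ := exists_relEnt_eq_projE hA.1.1 hQ
  have hRopt := hA.isOptimalQ hP hQ hR hRA
  obtain ⟨hXA, hYA⟩ := hA.marginals_eq hP hQ hRopt
  obtain ⟨hXB, hYB⟩ := hB.marginals_eq hP hQ hRopt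
  have hmid : (1 - 1 / 2 : ℝ) • A + (1 / 2 : ℝ) • B ∈ sameMarginals A :=
    ⟨hA.1.1.mix hB.1.1 (by norm_num) (by norm_num), by simp [← hXA, ← hXB, ← add_smul],
      by simp [← hYA, ← hYB, ← add_smul]⟩
  have hle : relEnt A P ≤ relEnt ((1 - 1 / 2 : ℝ) • A + (1 / 2 : ℝ) • B) P :=
    hA.isMinOn_relEnt hP hQ hr hmid
  linarith [relEnt_mix_lt hA.1.1.1 hB.1.1.1 hP.1 hAB (s := 1 / 2) (by norm_num) (by norm_num),
    hA.relEnt_eq hP hQ hr, hB.relEnt_eq hP hQ hr]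

theorem exponent_optimizers_unique_and_properties_general
    (P Q : X × Y → ℝ) (hP : IsPos P) (hQ : IsPos Q)
    (r : ℝ) (hr0 : 0 < r) (hr1 : r < projE Q P) :
    (∃! Qs : X × Y → ℝ, IsDist Qs ∧ projE Qs P ≤ r ∧
        relEnt Qs Q
          = sInf { d : ℝ | ∃ Qbar : X × Y → ℝ,
              IsDist Qbar ∧ projE Qbar P ≤ r ∧ d = relEnt Qbar Q }) ∧
    (∃! Ps : X × Y → ℝ, IsDist Ps ∧ relEnt Ps P ≤ r ∧
        projE Ps Q
          = sInf { d : ℝ | ∃ Pbar : X × Y → ℝ,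
              IsDist Pbar ∧ relEnt Pbar P ≤ r ∧ d = projE Pbar Q }) ∧
    (∀ Qs Ps : X × Y → ℝ,
      (IsDist Qs ∧ projE Qs P ≤ r ∧
        relEnt Qs Q
          = sInf { d : ℝ | ∃ Qbar : X × Y → ℝ,
              IsDist Qbar ∧ projE Qbar P ≤ r ∧ d = relEnt Qbar Q }) →
      (IsDist Ps ∧ relEnt Ps P ≤ r ∧
        projE Ps Q
          = sInf { d : ℝ | ∃ Pbar : X × Y → ℝ,
              IsDist Pbar ∧ relEnt Pbar P ≤ r ∧ d = projE Pbar Q }) →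
      IsPos Qs ∧ IsPos Ps ∧ SameCorr Qs Q ∧ SameCorr Ps P ∧
        margX Qs = margX Ps ∧ margY Qs = margY Ps) := by
  simp only [isOptimalQ_iff hQ, isOptimalP_iff hQ]
  obtain ⟨Qs, Ps, hQs, hPs⟩ := exists_isOptimalQ_isOptimalP hP hQ hr0.le
  refine ⟨⟨Qs, hQs, fun A hA => hA.unique hP hQ hQs⟩,
    ⟨Ps, hPs, fun B hB => hB.unique hP hQ hr1 hPs⟩, fun Qs Ps hQs hPs => ?_⟩
  exact ⟨hQs.isPos hP hQ, hPs.isPos hP hQ hr1, hQs.sameCorr hP hQ, hPs.sameCorr hP hQ hr1,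
    hPs.marginals_eq hP hQ hQs⟩

/-- uniqueness and properties of the optimizers of the two exponent
expressions. -/
theorem exponent_optimizers_unique_and_properties
    [Nonempty X] [Nonempty Y]
    (P Q : X × Y → ℝ) (hP : IsPos P) (hQ : IsPos Q)
    (r : ℝ) (hr0 : 0 < r) (hr1 : r < projE Q P) :
    (∃! Qs : X × Y → ℝ, IsDist Qs ∧ projE Qs P ≤ r ∧
        relEnt Qs Q
          = sInf { d : ℝ | ∃ Qbar : X × Y → ℝ,
              IsDist Qbar ∧ projE Qbar P ≤ r ∧ d = relEnt Qbar Q }) ∧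
    (∃! Ps : X × Y → ℝ, IsDist Ps ∧ relEnt Ps P ≤ r ∧
        projE Ps Q
          = sInf { d : ℝ | ∃ Pbar : X × Y → ℝ,
              IsDist Pbar ∧ relEnt Pbar P ≤ r ∧ d = projE Pbar Q }) ∧
    (∀ Qs Ps : X × Y → ℝ,
      (IsDist Qs ∧ projE Qs P ≤ r ∧
        relEnt Qs Q
          = sInf { d : ℝ | ∃ Qbar : X × Y → ℝ,
              IsDist Qbar ∧ projE Qbar P ≤ r ∧ d = relEnt Qbar Q }) →
      (IsDist Ps ∧ relEnt Ps P ≤ r ∧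
        projE Ps Q
          = sInf { d : ℝ | ∃ Pbar : X × Y → ℝ,
              IsDist Pbar ∧ relEnt Pbar P ≤ r ∧ d = projE Pbar Q }) →
      IsPos Qs ∧ IsPos Ps ∧ SameCorr Qs Q ∧ SameCorr Ps P ∧
        margX Qs = margX Ps ∧ margY Qs = margY Ps) :=
  exponent_optimizers_unique_and_properties_general P Q hP hQ r hr0 hr1
end
end

section
/- Let P and Q be positive joint distributions on 𝒳 × 𝒴. Then any minimizer P* of min{ D(P̃‖Q) : P̃ a joint distribution with P̃_X = P_X and P̃_Y = P_Y } (whose value is E(P‖Q)) is positive, satisfies P* ∈ ℰ^{xy}(Q), and obeys the Pythagorean identity D(P‖Q) = D(P‖P*) + D(P*‖Q). Similarly, any minimizer Q* of min{ D(Q̃‖P) : Q̃ a joint distribution with Q̃_X = Q_X and Q̃_Y = Q_Y } is positive, satisfies Q* ∈ ℰ^{xy}(P), and obeys D(Q‖P) = D(Q‖Q*) + D(Q*‖P). -/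
open scoped Classical BigOperators

noncomputable section

variable {X Y : Type*} [Fintype X] [Fintype Y]

/-!
A minimizer `P*` is positive because `u log u` has infinite slope at `0`: if `P*` vanished
somewhere, moving slightly towards the positive coupling `P` would strictly decrease `D(·‖Q)`.
Being positive, `P*` is an interior critical point of `D(·‖Q)` on the affine space of couplings,
so `log (P*/Q)` is orthogonal to every function with zero marginals. Testing against the
rectangles `(δ_x - δ_x₀) ⊗ (δ_y - δ_y₀)` gives `log (P*/Q) = a₁(x) + a₂(y)`, and testing against
`P - P*` gives `∑ P log (P*/Q) = D(P*‖Q)`, which is the Pythagorean identity.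
-/

open Real Finset Filter Set Topology

lemma mul_log_div_eq_sub {q : ℝ} (hq : q ≠ 0) (u : ℝ) :
    u * log (u / q) = u * log u - u * log q := by
  rcases eq_or_ne u 0 with rfl | hu
  · simp
  · rw [log_div hu hq]; ring

lemma sub_le_mul_log_div {u q : ℝ} (hu : 0 ≤ u) (hq : 0 < q) : u - q ≤ u * log (u / q) := by
  have h := mul_nonneg hq.le (InformationTheory.klFun_nonneg (div_nonneg hu hq.le))
  rw [InformationTheory.klFun_apply] at h
  field_simp at h
  linarith

lemma convexOn_mul_log_div {q : ℝ} (hq : q ≠ 0) : ConvexOn ℝ (Ici 0) fun u => u * log (u / q) := by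
  refine ⟨convex_Ici 0, fun x hx y hy a b ha hb hab => ?_⟩
  have h := convexOn_mul_log.2 hx hy ha hb hab
  simp only [smul_eq_mul, mul_log_div_eq_sub hq] at h ⊢
  nlinarith

lemma hasDerivAt_mul_log_div {u q : ℝ} (hu : u ≠ 0) (hq : q ≠ 0) :
    HasDerivAt (fun u => u * log (u / q)) (log (u / q) + 1) u := by
  rw [funext (mul_log_div_eq_sub hq), log_div hu hq]
  exact ((hasDerivAt_mul_log hu).fun_sub ((hasDerivAt_id' u).mul_const (log q))).congr_deriv
    (by ring)

lemma mul_mul_log_mul_div {t s q : ℝ} (hq : q ≠ 0) :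
    t * s * log (t * s / q) = t * (s * log (s / q)) + t * s * log t := by
  rcases eq_or_ne t 0 with rfl | ht
  · simp
  rcases eq_or_ne s 0 with rfl | hs
  · simp
  rw [mul_div_assoc, log_mul ht (div_ne_zero hs hq)]; ring

@[simp] lemma margX_add_s4 {α β : Type*} [Fintype β] (R S : α × β → ℝ) :
    margX (R + S) = margX R + margX S :=
  funext fun _ => sum_add_distrib

@[simp] lemma margY_add_s4 {α β : Type*} [Fintype α] (R S : α × β → ℝ) :
    margY (R + S) = margY R + margY S :=
  funext fun _ => sum_add_distrib

@[simp] lemma margX_sub {α β : Type*} [Fintype β] (R S : α × β → ℝ) :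
    margX (R - S) = margX R - margX S :=
  funext fun _ => sum_sub_distrib ..

@[simp] lemma margY_sub {α β : Type*} [Fintype α] (R S : α × β → ℝ) :
    margY (R - S) = margY R - margY S :=
  funext fun _ => sum_sub_distrib ..

@[simp] lemma margX_smul_s4 {α β : Type*} [Fintype β] (c : ℝ) (R : α × β → ℝ) :
    margX (c • R) = c • margX R :=
  funext fun _ => (mul_sum ..).symm

@[simp] lemma margY_smul_s4 {α β : Type*} [Fintype α] (c : ℝ) (R : α × β → ℝ) :
    margY (c • R) = c • margY R :=
  funext fun _ => (mul_sum ..).symm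

def couplings (P : X × Y → ℝ) : Set (X × Y → ℝ) :=
  {R | IsDist R ∧ margX R = margX P ∧ margY R = margY P}

def HasZeroMarginals (D : X × Y → ℝ) : Prop :=
  margX D = 0 ∧ margY D = 0

lemma HasZeroMarginals.smul {D : X × Y → ℝ} (hD : HasZeroMarginals D) (c : ℝ) :
    HasZeroMarginals (c • D) := by
  simp [HasZeroMarginals, hD.1, hD.2]

lemma HasZeroMarginals.sum_eq_zero {D : X × Y → ℝ} (hD : HasZeroMarginals D) :
    ∑ z, D z = 0 := by
  rw [Fintype.sum_prod_type]
  exact Finset.sum_eq_zero fun x _ => congrFun hD.1 x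

lemma hasZeroMarginals_sub {P R S : X × Y → ℝ} (hR : R ∈ couplings P) (hS : S ∈ couplings P) :
    HasZeroMarginals (R - S) := by
  simp [HasZeroMarginals, hR.2.1, hR.2.2, hS.2.1, hS.2.2]

lemma self_mem_couplings {P : X × Y → ℝ} (hP : IsDist P) : P ∈ couplings P :=
  ⟨hP, rfl, rfl⟩

lemma add_mem_couplings {P R D : X × Y → ℝ} (hR : R ∈ couplings P) (hD : HasZeroMarginals D)
    (h : ∀ z, 0 ≤ R z + D z) : R + D ∈ couplings P := by
  refine ⟨⟨h, ?_⟩, ?_, ?_⟩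
  · simp [sum_add_distrib, hR.1.2, hD.sum_eq_zero]
  · simp [hR.2.1, hD.1]
  · simp [hR.2.2, hD.2]

lemma convex_couplings (P : X × Y → ℝ) : Convex ℝ (couplings P) := by
  intro R hR S hS a b ha hb hab
  refine ⟨⟨fun z => ?_, ?_⟩, ?_, ?_⟩
  · simp only [Pi.add_apply, Pi.smul_apply, smul_eq_mul]
    have := hR.1.1 z; have := hS.1.1 z; positivity
  · simp [sum_add_distrib, ← mul_sum, hR.1.2, hS.1.2, hab]
  · simp [hR.2.1, hS.2.1, ← add_smul, hab]
  · simp [hR.2.2, hS.2.2, ← add_smul, hab]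

lemma sum_sub_le_relEnt {R Q : X × Y → ℝ} (hR : ∀ z, 0 ≤ R z) (hQ : ∀ z, 0 < Q z) :
    ∑ z, (R z - Q z) ≤ relEnt R Q :=
  sum_le_sum fun z _ => sub_le_mul_log_div (hR z) (hQ z)

lemma projE_le_relEnt_s4 {P Q R : X × Y → ℝ} (hQ : ∀ z, 0 < Q z) (hR : R ∈ couplings P) :
    projE P Q ≤ relEnt R Q := by
  refine csInf_le ⟨1 - ∑ z, Q z, ?_⟩ ⟨R, hR.1, hR.2.1, hR.2.2, rfl⟩
  rintro _ ⟨S, hS, -, -, rfl⟩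
  have h := sum_sub_le_relEnt hS.1 hQ
  rwa [sum_sub_distrib, hS.2] at h

lemma isMinOn_of_relEnt_eq_projE {P Q Ps : X × Y → ℝ} (hQ : ∀ z, 0 < Q z)
    (h : relEnt Ps Q = projE P Q) : IsMinOn (relEnt · Q) (couplings P) Ps :=
  isMinOn_iff.2 fun _ hR => h ▸ projE_le_relEnt_s4 hQ hR

lemma relEnt_eq_relEnt_add_sum {P Q R : X × Y → ℝ} (hR : ∀ z, R z ≠ 0) (hQ : ∀ z, Q z ≠ 0) :
    relEnt P Q = relEnt P R + ∑ z, P z * log (R z / Q z) := by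
  rw [relEnt, relEnt, ← sum_add_distrib]
  refine sum_congr rfl fun z _ => ?_
  rcases eq_or_ne (P z) 0 with hP | hP
  · simp [hP]
  · rw [log_div hP (hQ z), log_div hP (hR z), log_div (hR z) (hQ z)]; ring

lemma relEnt_smul_add_smul_le {Q R S : X × Y → ℝ} {t : ℝ} {z₀ : X × Y} (hR : ∀ z, 0 ≤ R z)
    (hS : ∀ z, 0 ≤ S z) (hQ : ∀ z, 0 < Q z) (ht₀ : 0 ≤ t) (ht₁ : t ≤ 1) (hz₀ : R z₀ = 0) :
    relEnt ((1 - t) • R + t • S) Q ≤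
      (1 - t) * relEnt R Q + t * relEnt S Q + t * S z₀ * log t := by
  have hterm : ∀ z, ((1 - t) * R z + t * S z) * log (((1 - t) * R z + t * S z) / Q z) ≤
      (1 - t) * (R z * log (R z / Q z)) + t * (S z * log (S z / Q z)) +
        if z = z₀ then t * S z₀ * log t else 0 := by
    intro z
    split_ifs with hz
    · subst hz
      simp [hz₀, mul_mul_log_mul_div (hQ z).ne']
    · have := (convexOn_mul_log_div (hQ z).ne').2 (mem_Ici.2 (hR z)) (mem_Ici.2 (hS z))
        (sub_nonneg.2 ht₁) ht₀ (by ring)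
      simpa using this
  calc relEnt ((1 - t) • R + t • S) Q ≤ ∑ z, ((1 - t) * (R z * log (R z / Q z)) +
        t * (S z * log (S z / Q z)) + if z = z₀ then t * S z₀ * log t else 0) :=
        sum_le_sum fun z _ => hterm z
    _ = _ := by simp [relEnt, sum_add_distrib, mul_sum]

lemma pos_of_isMinOn_relEnt {C : Set (X × Y → ℝ)} {Q R S : X × Y → ℝ} (hC : Convex ℝ C)
    (hC_nonneg : ∀ T ∈ C, ∀ z, 0 ≤ T z) (hQ : ∀ z, 0 < Q z) (hS : S ∈ C)
    (hS_pos : ∀ z, 0 < S z) (hR : R ∈ C) (hmin : IsMinOn (relEnt · Q) C R) (z₀ : X × Y) :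
    0 < R z₀ := by
  refine (hC_nonneg R hR z₀).lt_of_ne' fun hz₀ => ?_
  set t := exp (min 0 ((relEnt R Q - relEnt S Q) / S z₀ - 1))
  have ht₀ : 0 < t := exp_pos _
  have ht₁ : t ≤ 1 := exp_le_one_iff.2 (min_le_left _ _)
  have hlog : S z₀ * log t < relEnt R Q - relEnt S Q := by
    rw [log_exp, ← lt_div_iff₀' (hS_pos z₀)]
    exact (min_le_right _ _).trans_lt (sub_one_lt _)
  have hmix := hC hR hS (sub_nonneg.2 ht₁) ht₀.le (by ring)
  have hle := (isMinOn_iff.1 hmin _ hmix).trans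
    (relEnt_smul_add_smul_le (hC_nonneg R hR) (hC_nonneg S hS) hQ ht₀.le ht₁ hz₀)
  nlinarith [mul_pos ht₀ (sub_pos.2 hlog)]

lemma sum_mul_log_div_eq_zero_of_isMinOn {P Q Ps D : X × Y → ℝ} (hQ : ∀ z, 0 < Q z)
    (hPs : Ps ∈ couplings P) (hPs_pos : ∀ z, 0 < Ps z)
    (hmin : IsMinOn (relEnt · Q) (couplings P) Ps) (hD : HasZeroMarginals D) :
    ∑ z, D z * log (Ps z / Q z) = 0 := by
  set f : ℝ → ℝ := fun t => relEnt (Ps + t • D) Q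
  have hloc : IsLocalMin f 0 := by
    have hpos : ∀ᶠ t in 𝓝 (0 : ℝ), ∀ z, 0 < Ps z + t * D z := eventually_all.2 fun z =>
      continuousAt_const.eventually_lt
        (continuous_const.add (continuous_id.mul continuous_const)).continuousAt
        (by simpa using hPs_pos z)
    filter_upwards [hpos] with t ht
    simpa [f] using isMinOn_iff.1 hmin _ (add_mem_couplings hPs (hD.smul t) fun z => (ht z).le)
  have hderiv : HasDerivAt f (∑ z, (log (Ps z / Q z) + 1) * D z) 0 := by
    refine HasDerivAt.fun_sum fun z _ => ?_
    have hlin : HasDerivAt (fun t : ℝ => Ps z + t * D z) (D z) 0 := by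
      simpa using ((hasDerivAt_id (0 : ℝ)).mul_const (D z)).const_add (Ps z)
    exact (hasDerivAt_mul_log_div (hPs_pos z).ne' (hQ z).ne').comp_of_eq 0 hlin (by simp)
  have h0 := hloc.hasDerivAt_eq_zero hderiv
  simp only [add_mul, one_mul, sum_add_distrib, hD.sum_eq_zero, add_zero] at h0
  simpa only [mul_comm] using h0

lemma exists_eq_add_of_forall_hasZeroMarginals {L : X × Y → ℝ}
    (h : ∀ D, HasZeroMarginals D → ∑ z, D z * L z = 0) :
    ∃ (a₁ : X → ℝ) (a₂ : Y → ℝ), ∀ x y, L (x, y) = a₁ x + a₂ y := by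
  rcases isEmpty_or_nonempty X with _ | ⟨⟨x₀⟩⟩
  · exact ⟨0, 0, fun x => isEmptyElim x⟩
  rcases isEmpty_or_nonempty Y with _ | ⟨⟨y₀⟩⟩
  · exact ⟨0, 0, fun _ y => isEmptyElim y⟩
  refine ⟨fun x => L (x, y₀) - L (x₀, y₀), fun y => L (x₀, y), fun x y => ?_⟩
  set u : X → ℝ := Pi.single x 1 - Pi.single x₀ 1
  set v : Y → ℝ := Pi.single y 1 - Pi.single y₀ 1
  have hD : HasZeroMarginals fun z => u z.1 * v z.2 :=
    ⟨funext fun a => by simp [margX, ← mul_sum, v], funext fun b => by simp [margY, ← sum_mul, u]⟩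
  -- testing against this rectangle gives `L (x, y) - L (x, y₀) - L (x₀, y) + L (x₀, y₀) = 0`
  have := h _ hD
  rw [Fintype.sum_prod_type] at this
  simp only [u, v, Pi.sub_apply, Pi.single_apply, mul_sub, sub_mul, mul_ite, ite_mul, mul_one,
    one_mul, mul_zero, zero_mul, sum_sub_distrib, sum_ite_eq', Finset.mem_univ, ↓reduceIte] at this
  linarith

lemma isPos_sameCorr_pythagorean_of_relEnt_eq_projE {P Q Ps : X × Y → ℝ} (hP : IsPos P)
    (hQ : IsPos Q) (hPs : IsDist Ps) (hX : margX Ps = margX P) (hY : margY Ps = margY P)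
    (hmin : relEnt Ps Q = projE P Q) :
    IsPos Ps ∧ SameCorr Ps Q ∧ relEnt P Q = relEnt P Ps + relEnt Ps Q := by
  have hPs_mem : Ps ∈ couplings P := ⟨hPs, hX, hY⟩
  have hP_mem : P ∈ couplings P := self_mem_couplings ⟨fun z => (hP.1 z).le, hP.2⟩
  have hminOn := isMinOn_of_relEnt_eq_projE hQ.1 hmin
  have hPs_pos : ∀ z, 0 < Ps z := pos_of_isMinOn_relEnt (convex_couplings P)
    (fun _ hT => hT.1.1) hQ.1 hP_mem hP.1 hPs_mem hminOn
  have hcrit : ∀ D, HasZeroMarginals D → ∑ z, D z * log (Ps z / Q z) = 0 :=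
    fun _ => sum_mul_log_div_eq_zero_of_isMinOn hQ.1 hPs_mem hPs_pos hminOn
  refine ⟨⟨hPs_pos, hPs.2⟩, exists_eq_add_of_forall_hasZeroMarginals hcrit, ?_⟩
  have hcross := hcrit _ (hasZeroMarginals_sub hP_mem hPs_mem)
  simp only [Pi.sub_apply, sub_mul, sum_sub_distrib, sub_eq_zero] at hcross
  rw [relEnt_eq_relEnt_add_sum (fun z => (hPs_pos z).ne') (fun z => (hQ.1 z).ne'), hcross]; rfl

theorem projE_minimizer_properties_general
    (P Q : X × Y → ℝ) (hP : IsPos P) (hQ : IsPos Q) :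
    (∀ Ps : X × Y → ℝ, IsDist Ps → margX Ps = margX P → margY Ps = margY P →
        relEnt Ps Q = projE P Q →
      IsPos Ps ∧ SameCorr Ps Q ∧ relEnt P Q = relEnt P Ps + relEnt Ps Q) ∧
    (∀ Qs : X × Y → ℝ, IsDist Qs → margX Qs = margX Q → margY Qs = margY Q →
        relEnt Qs P = projE Q P →
      IsPos Qs ∧ SameCorr Qs P ∧ relEnt Q P = relEnt Q Qs + relEnt Qs P) :=
  ⟨fun _ => isPos_sameCorr_pythagorean_of_relEnt_eq_projE hP hQ,
    fun _ => isPos_sameCorr_pythagorean_of_relEnt_eq_projE hQ hP⟩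

/-- minimizers of the projected relative entropy are positive, lie in
the exponential family, and satisfy the Pythagorean identity. -/
theorem projE_minimizer_properties
    [Nonempty X] [Nonempty Y]
    (P Q : X × Y → ℝ) (hP : IsPos P) (hQ : IsPos Q) :
    (∀ Ps : X × Y → ℝ, IsDist Ps → margX Ps = margX P → margY Ps = margY P →
        relEnt Ps Q = projE P Q →
      IsPos Ps ∧ SameCorr Ps Q ∧ relEnt P Q = relEnt P Ps + relEnt Ps Q) ∧
    (∀ Qs : X × Y → ℝ, IsDist Qs → margX Qs = margX Q → margY Qs = margY Q →
        relEnt Qs P = projE Q P →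
      IsPos Qs ∧ SameCorr Qs P ∧ relEnt Q P = relEnt Q Qs + relEnt Qs P) :=
  projE_minimizer_properties_general P Q hP hQ
end
end
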